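/- arXiv:2203.14018 — 4 statements merged into one kernel-verified Lean document; each statement's English description precedes it below -/
import Mathlib

section
/- Dalal's revision is not language independent: there exist a signature Σ, a belief set K and formula A over Σ, and a bijection φ on the worlds of Σ such that φ(K *_Dalal A) ≠ φ(K) *_Dalal φ(A), where *_Dalal selects the models of A at minimal Hamming distance from the models of K. -/
/-- Hamming distance between two worlds over signature Fin n. -/
def hamming {n : ℕ} (ω ω' : Fin n → Bool) : ℕ :=
  (Finset.univ.filter (fun i => ω i ≠ ω' i)).card

/-- Hamming distance from a world to a set of worlds (as ℕ∞, ∞ if K = ∅). -/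
noncomputable def distToSet {n : ℕ} (ω : Fin n → Bool) (K : Set (Fin n → Bool)) : ℕ∞ :=
  ⨅ ω' ∈ K, (hamming ω ω' : ℕ∞)

/-- Dalal's revision on model sets: the models of A at minimal Hamming
distance from the models of K. -/
noncomputable def dalal {n : ℕ} (K A : Set (Fin n → Bool)) : Set (Fin n → Bool) :=
  {ω ∈ A | ∀ ω' ∈ A, distToSet ω K ≤ distToSet ω' K}

lemma distToSet_singleton {n : ℕ} (ω k : Fin n → Bool) :
    distToSet ω {k} = (hamming ω k : ℕ∞) := by
  simp [distToSet]

/-- Dalal's revision is not language independent: there are a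
signature, a belief set K, a formula A and a world bijection φ with
φ(K *_Dalal A) ≠ φ(K) *_Dalal φ(A). -/
theorem stmt_13 :
    ∃ (n : ℕ) (K A : Set (Fin n → Bool)) (φ : (Fin n → Bool) ≃ (Fin n → Bool)),
      φ '' dalal K A ≠ dalal (φ '' K) (φ '' A) := by
  set w00 : Fin 2 → Bool := ![false, false] with hw00
  set w01 : Fin 2 → Bool := ![false, true] with hw01
  set w11 : Fin 2 → Bool := ![true, true] with hw11
  refine ⟨2, {w00}, {w01, w11}, Equiv.swap w01 w11, ?_⟩
  intro heq
  have h01 : w01 ∈ dalal {w00} {w01, w11} := by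
    refine ⟨Set.mem_insert _ _, ?_⟩
    rintro ω' (rfl | rfl) <;>
      simp only [distToSet_singleton] <;> exact_mod_cast by decide
  have hmem : w11 ∈ Equiv.swap w01 w11 '' dalal {w00} {w01, w11} := by
    exact ⟨w01, h01, by simp⟩
  rw [heq] at hmem
  have hK : Equiv.swap w01 w11 '' {w00} = {w00} := by
    have : Equiv.swap w01 w11 w00 = w00 :=
      Equiv.swap_apply_of_ne_of_ne (by decide) (by decide)
    simp [this]
  have hA : Equiv.swap w01 w11 '' {w01, w11} = {w01, w11} := by
    ext x
    simp only [Set.image_insert_eq, Set.image_singleton, Equiv.swap_apply_left,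
      Equiv.swap_apply_right, Set.mem_insert_iff, Set.mem_singleton_iff]
    tauto
  rw [hK, hA] at hmem
  have := hmem.2 w01 (Set.mem_insert _ _)
  rw [distToSet_singleton, distToSet_singleton] at this
  have : hamming w11 w00 ≤ hamming w01 w00 := by exact_mod_cast this
  revert this; decide
end

section
/- A language independent revision operator * on belief sets satisfies (Language Independent P) if and only if it satisfies Parikh's postulate (P). -/
/-- A formula (model set) over worlds V → Bool depends only on the atoms in S. -/
def dependsOnly {V : Type*} (S : Set V) (A : Set (V → Bool)) : Prop :=
  ∀ ω ω' : V → Bool, (∀ x ∈ S, ω x = ω' x) → (ω ∈ A ↔ ω' ∈ A)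

/-- The model set of the S-part of a belief set with model set K:
the models of Th(K) ∩ L(S), i.e. the S-cylinder of K. -/
def cyl {V : Type*} (S : Set V) (K : Set (V → Bool)) : Set (V → Bool) :=
  {ω | ∃ ω' ∈ K, ∀ x ∈ S, ω x = ω' x}

/-- A revision operator (on belief sets identified with their model sets) is
language independent: φ(K * A) = φ(K) * φ(A) for every model transformation φ. -/
def langIndep {V : Type*} (rev : Set (V → Bool) → Set (V → Bool) → Set (V → Bool)) : Prop :=
  ∀ (φ : (V → Bool) ≃ (V → Bool)) (K A : Set (V → Bool)),
    φ '' rev K A = rev (φ '' K) (φ '' A)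

/-- Parikh's postulate (P): if K = Cn(C,D) with C over S₁, D over S₂ for a
partition {S₁, S₂}, and A over S₁, then K * A = (Cn(C) * A) + D. -/
def parikhP {V : Type*} (rev : Set (V → Bool) → Set (V → Bool) → Set (V → Bool)) : Prop :=
  ∀ (S₁ S₂ : Set V) (K C D A : Set (V → Bool)),
    S₁ ∪ S₂ = Set.univ → Disjoint S₁ S₂ →
    dependsOnly S₁ C → dependsOnly S₂ D → K = C ∩ D → dependsOnly S₁ A →
    rev K A = rev C A ∩ D

/-- (Language Independent P): if K has a syntax splitting ({S₁, S₂}, φ) with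
respect to model transformations and φ(A) ∈ L(S₁), then
K * A = φ⁻¹((φ(K) ∩ L(S₁)) * φ(A) + (φ(K) ∩ L(S₂))). -/
def liP {V : Type*} (rev : Set (V → Bool) → Set (V → Bool) → Set (V → Bool)) : Prop :=
  ∀ (S₁ S₂ : Set V) (φ : (V → Bool) ≃ (V → Bool)) (K A : Set (V → Bool)),
    S₁ ∪ S₂ = Set.univ → Disjoint S₁ S₂ →
    (∃ C D : Set (V → Bool), dependsOnly S₁ C ∧ dependsOnly S₂ D ∧ φ '' K = C ∩ D) →
    dependsOnly S₁ (φ '' A) →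
    rev K A = φ.symm '' (rev (cyl S₁ (φ '' K)) (φ '' A) ∩ cyl S₂ (φ '' K))

lemma dependsOnly_cyl {V : Type*} (S : Set V) (K : Set (V → Bool)) :
    dependsOnly S (cyl S K) := by
  intro ω ω' h
  constructor <;> rintro ⟨ω'', hK, a⟩
  · exact ⟨ω'', hK, fun x hx => (h x hx).symm.trans (a x hx)⟩
  · exact ⟨ω'', hK, fun x hx => (h x hx).trans (a x hx)⟩

lemma eq_cyl_inter {V : Type*} {S₁ S₂ : Set V} {K C D : Set (V → Bool)}
    (hC : dependsOnly S₁ C) (hD : dependsOnly S₂ D) (hK : K = C ∩ D) :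
    K = cyl S₁ K ∩ cyl S₂ K := by
  ext ω
  constructor
  · intro h
    exact ⟨⟨ω, h, fun _ _ => rfl⟩, ⟨ω, h, fun _ _ => rfl⟩⟩
  · rintro ⟨⟨ω₁, h₁, a₁⟩, ⟨ω₂, h₂, a₂⟩⟩
    subst hK
    exact ⟨(hC ω ω₁ a₁).mpr h₁.1, (hD ω ω₂ a₂).mpr h₂.2⟩

open Classical in
lemma cyl_inter_eq {V : Type*} {S₁ S₂ : Set V} {C D : Set (V → Bool)}
    (hdisj : Disjoint S₁ S₂)
    (hC : dependsOnly S₁ C) (hD : dependsOnly S₂ D) (hDne : D.Nonempty) :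
    cyl S₁ (C ∩ D) = C := by
  ext ω
  constructor
  · rintro ⟨ω', ⟨hC', _⟩, hagree⟩
    exact (hC ω ω' hagree).mpr hC'
  · intro hω
    obtain ⟨δ, hδ⟩ := hDne
    refine ⟨fun x => if x ∈ S₁ then ω x else δ x, ⟨?_, ?_⟩, ?_⟩
    · exact (hC _ ω (fun x hx => by simp [hx])).mpr hω
    · refine (hD _ δ (fun x hx => ?_)).mpr hδ
      have hx1 : x ∉ S₁ := fun h => Set.disjoint_left.mp hdisj h hx
      simp [hx1]
    · intro x hx; simp [hx]

lemma cyl_empty {V : Type*} (S : Set V) : cyl S (∅ : Set (V → Bool)) = ∅ := by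
  ext ω; simp [cyl]

/-- A language independent revision operator satisfies
(Language Independent P) iff it satisfies Parikh's (P). -/
theorem stmt_15 {V : Type*} [Fintype V]
    (rev : Set (V → Bool) → Set (V → Bool) → Set (V → Bool))
    (hli : langIndep rev) :
    liP rev ↔ parikhP rev := by
  constructor
  · intro h S₁ S₂ K C D A hun hdisj hC hD hK hA
    have hKA := h S₁ S₂ (Equiv.refl _) K A hun hdisj
      ⟨C, D, hC, hD, by simpa using hK⟩ (by simpa using hA)
    simp only [Equiv.refl_apply, Equiv.refl_symm, Equiv.coe_refl, Set.image_id, Set.image_id'] at hKA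
    by_cases hDne : D.Nonempty
    · by_cases hCne : C.Nonempty
      · rw [hKA, hK, cyl_inter_eq hdisj hC hD hDne,
          Set.inter_comm C D, cyl_inter_eq hdisj.symm hD hC hCne]
      · -- C = ∅, so K = ∅
        have hCe : C = ∅ := Set.not_nonempty_iff_eq_empty.mp hCne
        have hKe : K = ∅ := by rw [hK, hCe, Set.empty_inter]
        have hrevK : rev K A = ∅ := by
          rw [hKA, hKe, cyl_empty S₁, cyl_empty S₂, Set.inter_empty]
        rw [hrevK, hCe, ← hKe, hrevK, Set.empty_inter, hKe]
    · -- D = ∅, so K = ∅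
      have hDe : D = ∅ := Set.not_nonempty_iff_eq_empty.mp hDne
      have hKe : K = ∅ := by rw [hK, hDe, Set.inter_empty]
      have hrevK : rev K A = ∅ := by
        rw [hKA, hKe, cyl_empty S₁, cyl_empty S₂, Set.inter_empty]
      rw [hrevK, hDe, Set.inter_empty]
  · intro h S₁ S₂ φ K A hun hdisj hsplit hA
    obtain ⟨C, D, hC, hD, hKCD⟩ := hsplit
    have hsplit' : φ '' K = cyl S₁ (φ '' K) ∩ cyl S₂ (φ '' K) :=
      eq_cyl_inter hC hD hKCD
    have hp := h S₁ S₂ (φ '' K) (cyl S₁ (φ '' K)) (cyl S₂ (φ '' K)) (φ '' A)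
      hun hdisj (dependsOnly_cyl _ _) (dependsOnly_cyl _ _) hsplit' hA
    rw [← hp, ← hli φ K A, Equiv.symm_image_image]
end

section
/- For a partition {Σ₁, Σ₂} of a signature Σ and formulas C over Σ₁, D over Σ₂ with Cn(C,D) consistent, it holds that Cn(C, D) ∩ L(Σ₁) = Cn(C), i.e., the Σ₁-consequences of the combined belief set are exactly the consequences of C. -/
/-- For a partition {S₁, S₂} of the signature and formulas C over
S₁, D over S₂ with C ∧ D consistent, the S₁-consequences of Cn(C,D) are exactly
the S₁-consequences of C: Cn(C,D) ∩ L(S₁) = Cn(C). -/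
theorem stmt_16 {V : Type*} [Fintype V] (S₁ S₂ : Set V)
    (hpart : S₁ ∪ S₂ = Set.univ) (hdisj : Disjoint S₁ S₂)
    (C D : Set (V → Bool)) (hC : dependsOnly S₁ C) (hD : dependsOnly S₂ D)
    (hcons : (C ∩ D).Nonempty) :
    {A : Set (V → Bool) | dependsOnly S₁ A ∧ C ∩ D ⊆ A} =
      {A : Set (V → Bool) | dependsOnly S₁ A ∧ C ⊆ A} := by
  ext A
  simp only [Set.mem_setOf_eq, and_congr_right_iff]
  intro hA
  constructor
  · intro hsub ω hω
    obtain ⟨ω₀, hω₀C, hω₀D⟩ := hcons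
    classical
    set ω' : V → Bool := fun x => if x ∈ S₁ then ω x else ω₀ x with hω'
    have h1 : ∀ x ∈ S₁, ω x = ω' x := fun x hx => by simp [hω', hx]
    have h2 : ∀ x ∈ S₂, ω₀ x = ω' x := fun x hx => by
      have : x ∉ S₁ := fun h => hdisj.ne_of_mem h hx rfl
      simp [hω', this]
    have hω'C : ω' ∈ C := (hC ω ω' h1).mp hω
    have hω'D : ω' ∈ D := (hD ω₀ ω' h2).mp hω₀D
    exact (hA ω ω' h1).mpr (hsub ⟨hω'C, hω'D⟩)
  · intro hsub
    exact (Set.inter_subset_left).trans hsub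
end

section
/- There exists a belief set K over a two-element signature {a,b} that has no nontrivial syntax splitting but does have a nontrivial syntax splitting with respect to model transformations: K = Cn(a↮b) (exclusive or) admits a bijection φ of the four worlds such that φ(K) has syntax splitting {{a},{b}}. -/
/-- The linear transformation (a, b) ↦ (a ⊕ b, b) on worlds. -/
def phiFun : (Bool → Bool) → (Bool → Bool) :=
  fun ω x => if x then xor (ω true) (ω false) else ω false

lemma phiFun_involutive : Function.Involutive phiFun := by
  intro ω
  funext x
  cases x
  · simp [phiFun]
  · cases h1 : ω true <;> cases h2 : ω false <;> simp [phiFun, h1, h2]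

/-- Over the two-element signature (indexed by Bool: `true` is
the atom a, `false` is the atom b), the belief set K = Cn(a ↮ b) has no
nontrivial syntax splitting, but it has a nontrivial syntax splitting with
respect to model transformations: some world bijection φ makes φ(K) split
along {{a}, {b}}. -/
theorem stmt_17 :
    ¬ (∃ (S₁ S₂ : Set Bool) (C D : Set (Bool → Bool)),
        S₁.Nonempty ∧ S₂.Nonempty ∧ S₁ ∪ S₂ = Set.univ ∧ Disjoint S₁ S₂ ∧
        dependsOnly S₁ C ∧ dependsOnly S₂ D ∧
        {ω : Bool → Bool | ω true ≠ ω false} = C ∩ D) ∧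
    (∃ (φ : (Bool → Bool) ≃ (Bool → Bool)) (C D : Set (Bool → Bool)),
        dependsOnly {true} C ∧ dependsOnly {false} D ∧
        φ '' {ω : Bool → Bool | ω true ≠ ω false} = C ∩ D) := by
  constructor
  · rintro ⟨S₁, S₂, C, D, h1, h2, hunion, hdisj, hC, hD, hK⟩
    classical
    set ω₁ : Bool → Bool := fun x => x with hω₁
    set ω₂ : Bool → Bool := fun x => !x with hω₂
    have hω₁K : ω₁ ∈ C ∩ D := by rw [← hK]; simp [ω₁]
    have hω₂K : ω₂ ∈ C ∩ D := by rw [← hK]; simp [ω₂]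
    set ω₃ : Bool → Bool := fun x => if x ∈ S₁ then ω₁ x else ω₂ x with hω₃
    have hC3 : ω₃ ∈ C := by
      have := hC ω₁ ω₃ (fun x hx => by simp [ω₃, hx])
      exact this.mp hω₁K.1
    have hD3 : ω₃ ∈ D := by
      have := hD ω₂ ω₃ (fun x hx => by
        have hx1 : x ∉ S₁ := fun h => Set.disjoint_left.mp hdisj h hx
        simp [ω₃, hx1])
      exact this.mp hω₂K.2
    have h3K : ω₃ ∈ {ω : Bool → Bool | ω true ≠ ω false} := by
      rw [hK]; exact ⟨hC3, hD3⟩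
    by_cases ht : true ∈ S₁ <;> by_cases hf : false ∈ S₁
    · obtain ⟨x, hx⟩ := h2
      cases x
      · exact Set.disjoint_left.mp hdisj hf hx
      · exact Set.disjoint_left.mp hdisj ht hx
    · simp [ω₃, ht, hf, ω₁, ω₂] at h3K
    · simp [ω₃, ht, hf, ω₁, ω₂] at h3K
    · obtain ⟨x, hx⟩ := h1
      cases x
      · exact hf hx
      · exact ht hx
  · refine ⟨phiFun_involutive.toPerm, {ω | ω true = true}, Set.univ, ?_, ?_, ?_⟩
    · intro ω ω' h
      simp only [Set.mem_setOf_eq, h true (by simp)]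
    · intro ω ω' h
      simp
    · rw [Equiv.image_eq_preimage_symm]
      ext ω
      have : (phiFun_involutive.toPerm).symm ω = phiFun ω := rfl
      simp only [Set.mem_preimage, this, Set.mem_inter_iff, Set.mem_univ, and_true,
        Set.mem_setOf_eq, phiFun]
      cases h1 : ω true <;> cases h2 : ω false <;> simp
end
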